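/- arXiv:0906.5191 — 3 statements merged into one kernel-verified Lean document; each statement's English description precedes it below -/
import Mathlib

section
/- Let n ≥ 2 be an integer, set ε = n/(n−1) and s₃ = 2ε/(ε−1) = 2n. Let A : ℝ → ℝ be a positive function, c₁ > 0 a constant, and N > 1 a natural number such that: (i) A(pε)^p ≤ c₁ · p · A(p−1)^{p−1} for every real p ≥ N, and (ii) there is a constant c₀ > 0 with A(p) < c₀ for all p ∈ [N−1, Nε]. Then there exist constants s₁ ≥ 1 and s₂ > 0, depending only on c₀, c₁, n and N, such that A(p) ≤ s₁ · (s₂ p)^{−s₃/p} for all real p ≥ N−1. In particular A is bounded on [N−1, ∞) by a constant independent of p. -/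
/-!
With `s₂ = (Nε)⁻¹` the profile `s₁ (s₂ p)^(-s₃/p)` is at least `s₁ ≥ c₀` on `[N-1, Nε]`, where
`s₂ p ≤ 1`, and at most `s₁` beyond, where `s₂ p ≥ 1`. For `t = pε > Nε` raise the claimed bound
to the power `p`: the factor `s₁^(p-1)` supplied by the bound at `p - 1` cancels, and since
`s₃ - s₃/ε = 2` what is left is `c₁ p (s₂ pε)^r ≤ s₁ (s₂ (p-1))^(r+2)` with `r = s₃/ε`, true for
large `s₁` because `p ≤ 2(p-1)²` and `pε ≤ 4(p-1)`. As `t - (p-1) ≥ 1`, induction on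
`⌈t - Nε⌉` reaches every `t`.
-/

open Set

theorem forall_ge_of_forall_Icc_of_step {P : ℝ → Prop} {a b : ℝ}
    (base : ∀ t ∈ Icc a b, P t)
    (step : ∀ t, b < t → (∀ s ∈ Icc a (t - 1), P s) → P t) :
    ∀ t, a ≤ t → P t := by
  have key : ∀ k : ℕ, ∀ t ∈ Icc a (b + k), P t := by
    intro k
    induction k with
    | zero => simpa using base
    | succ k ih =>
      rintro t ⟨hat, htb⟩
      rcases le_or_gt t b with htb' | htb'
      · exact base t ⟨hat, htb'⟩
      · refine step t htb' fun s ⟨has, hst⟩ => ih s ⟨has, ?_⟩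
        push_cast at htb
        linarith
  intro t ht
  obtain ⟨k, hk⟩ := exists_nat_ge (t - b)
  exact key k t ⟨ht, by linarith⟩

theorem le_mul_rpow_of_rpow_le_mul {a a' c₁ s₁ s₂ s₃ p ε : ℝ} (ha : 0 ≤ a) (ha' : 0 ≤ a')
    (hc₁ : 0 ≤ c₁) (hs₁ : 0 < s₁) (hs₂ : 0 < s₂) (hp : 1 < p) (hε : 0 < ε)
    (hit : a' ^ p ≤ c₁ * p * a ^ (p - 1))
    (ha_le : a ≤ s₁ * (s₂ * (p - 1)) ^ (-s₃ / (p - 1)))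
    (hc : c₁ * p * (s₂ * (p - 1)) ^ (-s₃) ≤ s₁ * (s₂ * (p * ε)) ^ (-s₃ / ε)) :
    a' ≤ s₁ * (s₂ * (p * ε)) ^ (-s₃ / (p * ε)) := by
  have hq : 0 < p - 1 := by linarith
  rw [← Real.rpow_le_rpow_iff ha' (by positivity) (by linarith : (0 : ℝ) < p)]
  calc a' ^ p ≤ c₁ * p * (s₁ * (s₂ * (p - 1)) ^ (-s₃ / (p - 1))) ^ (p - 1) :=
        hit.trans (by gcongr)
    _ = s₁ ^ (p - 1) * (c₁ * p * (s₂ * (p - 1)) ^ (-s₃)) := by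
        rw [Real.mul_rpow hs₁.le (by positivity), ← Real.rpow_mul (by positivity),
          div_mul_cancel₀ _ hq.ne']
        ring
    _ ≤ s₁ ^ (p - 1) * (s₁ * (s₂ * (p * ε)) ^ (-s₃ / ε)) := by gcongr
    _ = (s₁ * (s₂ * (p * ε)) ^ (-s₃ / (p * ε))) ^ p := by
        rw [Real.mul_rpow hs₁.le (by positivity), ← Real.rpow_mul (by positivity),
          show -s₃ / (p * ε) * p = -s₃ / ε by field_simp, ← mul_assoc,
          ← Real.rpow_add_one hs₁.ne', sub_add_cancel]

theorem mul_rpow_neg_le_mul_rpow_neg {c₁ s₁ s₂ s₃ p ε : ℝ} (hc₁ : 0 ≤ c₁) (hs₂ : 0 < s₂)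
    (hp : 2 ≤ p) (hε : 0 < ε) (hε2 : ε ≤ 2) (hs₃ : 0 ≤ s₃) (hs₃ε : s₃ - s₃ / ε = 2)
    (hs₁ : 2 * 4 ^ (s₃ / ε) * c₁ / s₂ ^ 2 ≤ s₁) :
    c₁ * p * (s₂ * (p - 1)) ^ (-s₃) ≤ s₁ * (s₂ * (p * ε)) ^ (-s₃ / ε) := by
  set r := s₃ / ε
  have hr : 0 ≤ r := by positivity
  have hq : 0 < s₂ * (p - 1) := mul_pos hs₂ (by linarith)
  rw [show -s₃ / ε = -r by rw [neg_div], show -s₃ = -(r + 2) by linarith, Real.rpow_neg hq.le,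
    Real.rpow_neg (by positivity), ← div_eq_mul_inv, ← div_eq_mul_inv,
    div_le_div_iff₀ (by positivity) (by positivity), Real.rpow_add hq, Real.rpow_two]
  calc c₁ * p * (s₂ * (p * ε)) ^ r ≤ c₁ * (2 * (p - 1) ^ 2) * (4 * (s₂ * (p - 1))) ^ r := by
        have hp2 : p ≤ 2 * (p - 1) ^ 2 := by nlinarith
        have hpε : s₂ * (p * ε) ≤ 4 * (s₂ * (p - 1)) := by nlinarith
        exact mul_le_mul (mul_le_mul_of_nonneg_left hp2 hc₁)
          (Real.rpow_le_rpow (by positivity) hpε hr) (by positivity) (by positivity)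
    _ = 2 * 4 ^ r * c₁ / s₂ ^ 2 * ((s₂ * (p - 1)) ^ r * (s₂ * (p - 1)) ^ 2) := by
        rw [Real.mul_rpow (by norm_num) hq.le]
        field_simp
    _ ≤ s₁ * ((s₂ * (p - 1)) ^ r * (s₂ * (p - 1)) ^ 2) := by gcongr

theorem le_mul_rpow_neg_div {s₁ s₂ s₃ p : ℝ} (hs₁ : 0 ≤ s₁) (hs₃ : 0 ≤ s₃) (hp : 0 < p)
    (hs₂p : 0 < s₂ * p) (hs₂p1 : s₂ * p ≤ 1) : s₁ ≤ s₁ * (s₂ * p) ^ (-s₃ / p) :=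
  le_mul_of_one_le_right hs₁ (Real.one_le_rpow_of_pos_of_le_one_of_nonpos hs₂p hs₂p1
    (div_nonpos_of_nonpos_of_nonneg (neg_nonpos.2 hs₃) hp.le))

theorem mul_rpow_neg_div_le {s₁ s₂ s₃ p : ℝ} (hs₁ : 0 ≤ s₁) (hs₃ : 0 ≤ s₃) (hp : 0 ≤ p)
    (hs₂p : 1 ≤ s₂ * p) : s₁ * (s₂ * p) ^ (-s₃ / p) ≤ s₁ :=
  mul_le_of_le_one_right hs₁ (Real.rpow_le_one_of_one_le_of_nonpos hs₂p
    (div_nonpos_of_nonpos_of_nonneg (neg_nonpos.2 hs₃) hp))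

theorem div_sub_one_mem_Ioc {x : ℝ} (hx : 2 ≤ x) : x / (x - 1) ∈ Ioc 1 2 := by
  constructor
  · rw [lt_div_iff₀ (by linarith)]; linarith
  · rw [div_le_iff₀ (by linarith)]; linarith

theorem moser_iteration_basic_general
    (n : ℕ) (hn : 2 ≤ n)
    (ε : ℝ) (hε : ε = (n : ℝ) / ((n : ℝ) - 1))
    (s₃ : ℝ) (hs₃ : s₃ = 2 * n)
    (A : ℝ → ℝ) (hApos : ∀ p : ℝ, 0 < A p)
    (c₁ : ℝ) (hc₁ : 0 < c₁)
    (N : ℕ) (hN : 1 < N)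
    (hiter : ∀ p : ℝ, (N : ℝ) ≤ p →
      A (p * ε) ^ p ≤ c₁ * p * A (p - 1) ^ (p - 1))
    (c₀ : ℝ)
    (hinit : ∀ p : ℝ, p ∈ Set.Icc ((N : ℝ) - 1) ((N : ℝ) * ε) → A p < c₀) :
    (∃ s₁ s₂ : ℝ, 1 ≤ s₁ ∧ 0 < s₂ ∧
      ∀ p : ℝ, (N : ℝ) - 1 ≤ p → A p ≤ s₁ * (s₂ * p) ^ (-s₃ / p)) ∧
    ∃ C : ℝ, ∀ p : ℝ, (N : ℝ) - 1 ≤ p → A p ≤ C := by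
  have hn' : (2 : ℝ) ≤ n := by exact_mod_cast hn
  have hN' : (2 : ℝ) ≤ N := by exact_mod_cast hN
  obtain ⟨hε1, hε2⟩ : ε ∈ Ioc 1 2 := hε ▸ div_sub_one_mem_Ioc hn'
  have hs₃0 : 0 ≤ s₃ := by rw [hs₃]; positivity
  have hs₃ε : s₃ - s₃ / ε = 2 := by rw [hs₃, hε]; field_simp; ring
  set s₂ := ((N : ℝ) * ε)⁻¹
  have hs₂ : 0 < s₂ := by positivity
  set s₁ := max c₀ (max 1 (2 * 4 ^ (s₃ / ε) * c₁ / s₂ ^ 2))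
  have hs₁ : 1 ≤ s₁ := le_max_of_le_right (le_max_left _ _)
  have hc₀s₁ : ∀ p ∈ Icc ((N : ℝ) - 1) ((N : ℝ) * ε), A p ≤ s₁ :=
    fun p hp => (hinit p hp).le.trans (le_max_left _ _)
  have bound : ∀ p : ℝ, (N : ℝ) - 1 ≤ p → A p ≤ s₁ * (s₂ * p) ^ (-s₃ / p) := by
    refine forall_ge_of_forall_Icc_of_step (b := N * ε) (fun p hp => ?_) fun t ht ih => ?_
    · have hp0 : 0 < p := by linarith [hp.1]
      exact (hc₀s₁ p hp).trans (le_mul_rpow_neg_div (by linarith) hs₃0 hp0 (mul_pos hs₂ hp0)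
        ((inv_mul_le_one₀ (by positivity)).2 hp.2))
    · have hpN : (N : ℝ) ≤ t / ε := by rw [le_div_iff₀ (by positivity)]; linarith
      have htε : t / ε ≤ t := div_le_self (lt_trans (by positivity) ht).le hε1.le
      rw [← div_mul_cancel₀ t (by positivity : ε ≠ 0)]
      exact le_mul_rpow_of_rpow_le_mul (hApos _).le (hApos _).le hc₁.le (by linarith) hs₂
        (by linarith) (by linarith) (hiter _ hpN) (ih _ ⟨by linarith, by linarith⟩)
        (mul_rpow_neg_le_mul_rpow_neg hc₁.le hs₂ (by linarith) (by linarith) hε2 hs₃0 hs₃ε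
          (le_max_of_le_right (le_max_right _ _)))
  refine ⟨⟨s₁, s₂, hs₁, hs₂, bound⟩, s₁, fun p hp => ?_⟩
  rcases le_or_gt p (N * ε) with hpb | hpb
  · exact hc₀s₁ p ⟨hp, hpb⟩
  · exact (bound p hp).trans (mul_rpow_neg_div_le (by linarith) hs₃0 (by linarith)
      ((one_le_inv_mul₀ (by positivity)).2 hpb.le))

/-- Moser-type iteration lemma: key step of the C⁰-estimate for the
Monge–Ampère equation on conical Kähler manifolds. -/
theorem moser_iteration_basic
    (n : ℕ) (hn : 2 ≤ n)
    (ε : ℝ) (hε : ε = (n : ℝ) / ((n : ℝ) - 1))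
    (s₃ : ℝ) (hs₃ : s₃ = 2 * n)
    (A : ℝ → ℝ) (hApos : ∀ p : ℝ, 0 < A p)
    (c₁ : ℝ) (hc₁ : 0 < c₁)
    (N : ℕ) (hN : 1 < N)
    (hiter : ∀ p : ℝ, (N : ℝ) ≤ p →
      A (p * ε) ^ p ≤ c₁ * p * A (p - 1) ^ (p - 1))
    (c₀ : ℝ) (hc₀ : 0 < c₀)
    (hinit : ∀ p : ℝ, p ∈ Set.Icc ((N : ℝ) - 1) ((N : ℝ) * ε) → A p < c₀) :
    (∃ s₁ s₂ : ℝ, 1 ≤ s₁ ∧ 0 < s₂ ∧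
      ∀ p : ℝ, (N : ℝ) - 1 ≤ p → A p ≤ s₁ * (s₂ * p) ^ (-s₃ / p)) ∧
    ∃ C : ℝ, ∀ p : ℝ, (N : ℝ) - 1 ≤ p → A p ≤ C :=
  moser_iteration_basic_general n hn ε hε s₃ hs₃ A hApos c₁ hc₁ N hN hiter c₀ hinit
end

section
/- Let n ≥ 2 be an integer, set ε = n/(n−1) and s₃ = 2ε/(ε−1) = 2n. Let B : ℝ → ℝ be a positive function and c₁, c₂, c₃ > 0 constants, and N > 1 a natural number such that: (i) B(pε)^p ≤ c₁ · p · B(p−1)^{p−1} + (c₂ p² + c₃) · B(p)^p for every real p ≥ N, and (ii) there is a constant c₀ > 0 with B(p) < c₀ for all p ∈ [N−1, Nε]. Then there exist constants s₁ ≥ 1 and s₂ > 0, depending only on c₀, c₁, c₂, c₃, n and N, such that B(p) ≤ s₁ · (s₂ p)^{−s₃/p} for all real p ≥ N−1. In particular B is bounded on [N−1, ∞) by a constant independent of p. -/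
/-!
If `B ≤ M` on `[N - 1, q]` with `M ≥ 1` and `q ≥ N`, the iteration inequality at `q` gives
`B(qε)^q ≤ C q² M^q` with `C = c₁ + c₂ + c₃`, i.e. `B(qε) ≤ (C q²)^(1/q) M`. Extending a bound
from `[N - 1, Nε^(k+1)]` to `[N - 1, Nε^(k+2)]` thus costs a factor `exp (log (C q²) / q)` with
`q ≥ Nε^k`; since `log (C q²) / q = O(q^(-1/2))`, the exponents of these factors are dominated
by a geometric series of ratio `ε^(-1/2)`, so `B` is bounded on `[N - 1, ∞)`. A bounded `B`
satisfies the weighted bound with `s₂ = 1` because `p^(-s₃/p) ≥ e^(-s₃)`.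
-/

open Real Set

theorem le_rpow_inv_mul_of_rpow_le_moser {x y z M q c₁ c₂ c₃ : ℝ}
    (hc₁ : 0 ≤ c₁) (hc₂ : 0 ≤ c₂) (hc₃ : 0 ≤ c₃) (hq : 1 ≤ q)
    (hx : 0 ≤ x) (hy : 0 ≤ y) (hz : 0 ≤ z) (hM : 1 ≤ M) (hyM : y ≤ M) (hzM : z ≤ M)
    (h : x ^ q ≤ c₁ * q * y ^ (q - 1) + (c₂ * q ^ 2 + c₃) * z ^ q) :
    x ≤ ((c₁ + c₂ + c₃) * q ^ 2) ^ q⁻¹ * M := by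
  have hMq : 0 ≤ M ^ q := by positivity
  have hpow : x ^ q ≤ (c₁ + c₂ + c₃) * q ^ 2 * M ^ q :=
    calc x ^ q ≤ c₁ * q * M ^ q + (c₂ * q ^ 2 + c₃) * M ^ q := h.trans <| by
          have hy' : y ^ (q - 1) ≤ M ^ q :=
            (rpow_le_rpow hy hyM (by linarith)).trans (rpow_le_rpow_of_exponent_le hM (by linarith))
          have hz' : z ^ q ≤ M ^ q := rpow_le_rpow hz hzM (by linarith)
          gcongr
      _ ≤ (c₁ + c₂ + c₃) * q ^ 2 * M ^ q := by
          have : c₁ * q + c₃ ≤ (c₁ + c₃) * q ^ 2 := by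
            nlinarith [mul_nonneg (mul_nonneg hc₁ (by linarith : 0 ≤ q)) (by linarith : 0 ≤ q - 1),
              mul_nonneg hc₃ (by nlinarith : 0 ≤ q ^ 2 - 1)]
          nlinarith
  calc x ≤ ((c₁ + c₂ + c₃) * q ^ 2 * M ^ q) ^ q⁻¹ :=
        (le_rpow_inv_iff_of_pos hx (by positivity) (by linarith)).2 hpow
    _ = ((c₁ + c₂ + c₃) * q ^ 2) ^ q⁻¹ * M := by
        rw [mul_rpow (by positivity) hMq, rpow_rpow_inv (by linarith) (by linarith)]

theorem rpow_inv_le_exp_div_sqrt {C q : ℝ} (hC : 0 < C) (hq : 1 ≤ q) :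
    (C * q ^ 2) ^ q⁻¹ ≤ exp ((|log C| + 4) / √q) := by
  have hsq : 1 ≤ √q := one_le_sqrt.2 hq
  have hlogq : log q ≤ 2 * √q := by
    have := log_le_sub_one_of_pos (by linarith : 0 < √q)
    rw [log_sqrt (by linarith)] at this
    linarith
  have hlog : log (C * q ^ 2) ≤ (|log C| + 4) * √q := by
    rw [log_mul hC.ne' (by positivity), log_pow, Nat.cast_ofNat]
    nlinarith [le_abs_self (log C), mul_le_mul_of_nonneg_left hsq (abs_nonneg (log C))]
  rw [rpow_def_of_pos (by positivity), exp_le_exp]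
  calc log (C * q ^ 2) * q⁻¹ = log (C * q ^ 2) / √q / √q := by
        rw [div_div, mul_self_sqrt (by linarith), div_eq_mul_inv]
    _ ≤ (|log C| + 4) / √q := by
        gcongr
        rwa [div_le_iff₀ (by linarith)]

theorem exp_neg_le_rpow_neg_div {p s : ℝ} (hp : 0 < p) (hs : 0 ≤ s) :
    exp (-s) ≤ p ^ (-s / p) := by
  have hlog : log p / p ≤ 1 :=
    (div_le_one hp).2 ((log_le_sub_one_of_pos hp).trans (by linarith))
  rw [rpow_def_of_pos hp, exp_le_exp,
    show log p * (-s / p) = -(s * (log p / p)) by ring, neg_le_neg_iff]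
  exact mul_le_of_le_one_right hs hlog

def MoserInequality (B : ℝ → ℝ) (ε c₁ c₂ c₃ N : ℝ) : Prop :=
  ∀ p, N ≤ p → B (p * ε) ^ p ≤ c₁ * p * B (p - 1) ^ (p - 1) + (c₂ * p ^ 2 + c₃) * B p ^ p

section MoserInequality

variable {B : ℝ → ℝ} {ε c₁ c₂ c₃ N : ℝ}

theorem MoserInequality.bound_extend (hiter : MoserInequality B ε c₁ c₂ c₃ N)
    (hB : ∀ p, 0 ≤ B p) (hε : 1 < ε) (hN : 1 ≤ N) (hc₁ : 0 < c₁) (hc₂ : 0 < c₂) (hc₃ : 0 < c₃)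
    {b M : ℝ} (hb : N * ε ≤ b) (hM : 1 ≤ M) (hBM : ∀ p ∈ Icc (N - 1) b, B p ≤ M) :
    ∀ p ∈ Icc (N - 1) (b * ε), B p ≤ exp ((|log (c₁ + c₂ + c₃)| + 4) / √(b / ε)) * M := by
  rintro p ⟨hNp, hpb⟩
  by_cases hpb' : p ≤ b
  · exact (hBM p ⟨hNp, hpb'⟩).trans
      (le_mul_of_one_le_left (by linarith) (one_le_exp (by positivity)))
  have hε₀ : 0 < ε := by linarith
  set q := p / ε
  have hqε : q * ε = p := div_mul_cancel₀ p hε₀.ne'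
  have hbq : b / ε ≤ q := div_le_div_of_nonneg_right (le_of_not_ge hpb') hε₀.le
  have hqb : q ≤ b := (div_le_iff₀ hε₀).2 hpb
  have hNb : N ≤ b / ε := (le_div_iff₀ hε₀).2 hb
  have hNq : N ≤ q := hNb.trans hbq
  have hstep := hiter q hNq
  rw [hqε] at hstep
  calc B p ≤ ((c₁ + c₂ + c₃) * q ^ 2) ^ q⁻¹ * M :=
        le_rpow_inv_mul_of_rpow_le_moser hc₁.le hc₂.le hc₃.le (by linarith) (hB p) (hB _) (hB q)
          hM (hBM (q - 1) ⟨by linarith, by linarith⟩) (hBM q ⟨by linarith, hqb⟩) hstep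
    _ ≤ exp ((|log (c₁ + c₂ + c₃)| + 4) / √q) * M := by
        gcongr
        exact rpow_inv_le_exp_div_sqrt (by positivity) (by linarith)
    _ ≤ exp ((|log (c₁ + c₂ + c₃)| + 4) / √(b / ε)) * M := by
        have : 0 < b / ε := by linarith
        gcongr

theorem MoserInequality.bound_Icc_pow (hiter : MoserInequality B ε c₁ c₂ c₃ N)
    (hB : ∀ p, 0 ≤ B p) (hε : 1 < ε) (hN : 1 ≤ N) (hc₁ : 0 < c₁) (hc₂ : 0 < c₂) (hc₃ : 0 < c₃)
    {M₀ : ℝ} (hM₀ : 1 ≤ M₀) (hinit : ∀ p ∈ Icc (N - 1) (N * ε), B p ≤ M₀) (k : ℕ) :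
    ∀ p ∈ Icc (N - 1) (N * ε ^ (k + 1)),
      B p ≤ M₀ * exp ((|log (c₁ + c₂ + c₃)| + 4) * ∑ j ∈ Finset.range k, (√ε)⁻¹ ^ j) := by
  induction k with
  | zero => simpa using hinit
  | succ k ih =>
    set K := |log (c₁ + c₂ + c₃)| + 4
    have hK : 0 ≤ K := by positivity
    have hεk : 1 ≤ ε ^ k := one_le_pow₀ hε.le
    have hM : 1 ≤ M₀ * exp (K * ∑ j ∈ Finset.range k, (√ε)⁻¹ ^ j) :=
      one_le_mul_of_one_le_of_one_le hM₀ (one_le_exp (by positivity))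
    have hb : N * ε ≤ N * ε ^ (k + 1) := by gcongr; exact le_self_pow₀ hε.le (by omega)
    have hdecay : K / √(N * ε ^ (k + 1) / ε) ≤ K * (√ε)⁻¹ ^ k := by
      rw [pow_succ, ← mul_assoc, mul_div_cancel_right₀ _ (by linarith), inv_pow, ← div_eq_mul_inv]
      refine div_le_div_of_nonneg_left hK (by positivity) ?_
      rw [le_sqrt (by positivity) (by nlinarith), ← pow_mul, mul_comm, pow_mul,
        sq_sqrt (by linarith)]
      nlinarith
    intro p hp
    calc B p
        ≤ exp (K / √(N * ε ^ (k + 1) / ε)) * (M₀ * exp (K * ∑ j ∈ Finset.range k, (√ε)⁻¹ ^ j)) :=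
          hiter.bound_extend hB hε hN hc₁ hc₂ hc₃ hb hM ih p (by rwa [mul_assoc, ← pow_succ])
      _ ≤ exp (K * (√ε)⁻¹ ^ k) * (M₀ * exp (K * ∑ j ∈ Finset.range k, (√ε)⁻¹ ^ j)) := by
          gcongr
      _ = M₀ * exp (K * ∑ j ∈ Finset.range (k + 1), (√ε)⁻¹ ^ j) := by
          rw [Finset.sum_range_succ, mul_add, exp_add]
          ring

theorem MoserInequality.exists_bound (hiter : MoserInequality B ε c₁ c₂ c₃ N)
    (hB : ∀ p, 0 ≤ B p) (hε : 1 < ε) (hN : 1 ≤ N) (hc₁ : 0 < c₁) (hc₂ : 0 < c₂) (hc₃ : 0 < c₃)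
    {M₀ : ℝ} (hM₀ : 1 ≤ M₀) (hinit : ∀ p ∈ Icc (N - 1) (N * ε), B p ≤ M₀) :
    ∃ C, ∀ p, N - 1 ≤ p → B p ≤ C := by
  set K := |log (c₁ + c₂ + c₃)| + 4
  have hr₀ : 0 ≤ (√ε)⁻¹ := by positivity
  have hr₁ : (√ε)⁻¹ < 1 := inv_lt_one_of_one_lt₀ (lt_sqrt (by norm_num) |>.2 (by linarith))
  refine ⟨M₀ * exp (K * (1 - (√ε)⁻¹)⁻¹), fun p hp => ?_⟩
  obtain ⟨k, hk⟩ := pow_unbounded_of_one_lt (p / N) hε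
  have hpk : p ≤ N * ε ^ (k + 1) := by
    rw [div_lt_iff₀ (by linarith)] at hk
    nlinarith [mul_le_mul_of_nonneg_right (pow_le_pow_right₀ hε.le (k.le_add_right 1))
      (by linarith : 0 ≤ N)]
  calc B p ≤ M₀ * exp (K * ∑ j ∈ Finset.range k, (√ε)⁻¹ ^ j) :=
        hiter.bound_Icc_pow hB hε hN hc₁ hc₂ hc₃ hM₀ hinit k p ⟨hp, hpk⟩
    _ ≤ M₀ * exp (K * (1 - (√ε)⁻¹)⁻¹) := by
        have hK : 0 ≤ K := by positivity
        have := geom_sum_Ico_le_of_lt_one (m := 0) (n := k) hr₀ hr₁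
        rw [← Finset.range_eq_Ico, pow_zero, one_div] at this
        gcongr

end MoserInequality

theorem moser_iteration_weighted_general
    (n : ℕ) (hn : 2 ≤ n)
    (ε : ℝ) (hε : ε = (n : ℝ) / ((n : ℝ) - 1))
    (s₃ : ℝ) (hs₃ : s₃ = 2 * n)
    (B : ℝ → ℝ) (hBpos : ∀ p : ℝ, 0 < B p)
    (c₁ c₂ c₃ : ℝ) (hc₁ : 0 < c₁) (hc₂ : 0 < c₂) (hc₃ : 0 < c₃)
    (N : ℕ) (hN : 1 < N)
    (hiter : ∀ p : ℝ, (N : ℝ) ≤ p →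
      B (p * ε) ^ p ≤ c₁ * p * B (p - 1) ^ (p - 1) + (c₂ * p ^ 2 + c₃) * B p ^ p)
    (c₀ : ℝ)
    (hinit : ∀ p : ℝ, p ∈ Set.Icc ((N : ℝ) - 1) ((N : ℝ) * ε) → B p < c₀) :
    (∃ s₁ s₂ : ℝ, 1 ≤ s₁ ∧ 0 < s₂ ∧
      ∀ p : ℝ, (N : ℝ) - 1 ≤ p → B p ≤ s₁ * (s₂ * p) ^ (-s₃ / p)) ∧
    ∃ C : ℝ, ∀ p : ℝ, (N : ℝ) - 1 ≤ p → B p ≤ C := by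
  have hn' : (2 : ℝ) ≤ n := by exact_mod_cast hn
  have hε₁ : 1 < ε := by rw [hε, one_lt_div (by linarith)]; linarith
  have hs₃₀ : 0 ≤ s₃ := by rw [hs₃]; positivity
  have hN₂ : (2 : ℝ) ≤ N := by exact_mod_cast hN
  obtain ⟨C, hC⟩ := MoserInequality.exists_bound hiter (fun p => (hBpos p).le) hε₁ (by linarith)
    hc₁ hc₂ hc₃
    (le_max_right c₀ 1) fun p hp => (hinit p hp).le.trans (le_max_left c₀ 1)
  refine ⟨⟨max 1 (C * exp s₃), 1, le_max_left _ _, one_pos, fun p hp => ?_⟩, C, hC⟩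
  calc B p ≤ C * exp s₃ * exp (-s₃) := by
        rw [mul_assoc, ← exp_add, add_neg_cancel, exp_zero, mul_one]
        exact hC p hp
    _ ≤ max 1 (C * exp s₃) * (1 * p) ^ (-s₃ / p) := by
        rw [one_mul]
        exact mul_le_mul (le_max_right _ _) (exp_neg_le_rpow_neg_div (by linarith) hs₃₀)
          (exp_pos _).le (zero_le_one.trans (le_max_left _ _))

/-- Generalized Moser-type iteration lemma with the extra term `(c₂p² + c₃)B(p)^p`,
used in the weighted C⁰-estimate for the Monge–Ampère equation on conical
Kähler manifolds. -/
theorem moser_iteration_weighted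
    (n : ℕ) (hn : 2 ≤ n)
    (ε : ℝ) (hε : ε = (n : ℝ) / ((n : ℝ) - 1))
    (s₃ : ℝ) (hs₃ : s₃ = 2 * n)
    (B : ℝ → ℝ) (hBpos : ∀ p : ℝ, 0 < B p)
    (c₁ c₂ c₃ : ℝ) (hc₁ : 0 < c₁) (hc₂ : 0 < c₂) (hc₃ : 0 < c₃)
    (N : ℕ) (hN : 1 < N)
    (hiter : ∀ p : ℝ, (N : ℝ) ≤ p →
      B (p * ε) ^ p ≤ c₁ * p * B (p - 1) ^ (p - 1) + (c₂ * p ^ 2 + c₃) * B p ^ p)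
    (c₀ : ℝ) (hc₀ : 0 < c₀)
    (hinit : ∀ p : ℝ, p ∈ Set.Icc ((N : ℝ) - 1) ((N : ℝ) * ε) → B p < c₀) :
    (∃ s₁ s₂ : ℝ, 1 ≤ s₁ ∧ 0 < s₂ ∧
      ∀ p : ℝ, (N : ℝ) - 1 ≤ p → B p ≤ s₁ * (s₂ * p) ^ (-s₃ / p)) ∧
    ∃ C : ℝ, ∀ p : ℝ, (N : ℝ) - 1 ≤ p → B p ≤ C :=
  moser_iteration_weighted_general n hn ε hε s₃ hs₃ B hBpos c₁ c₂ c₃ hc₁ hc₂ hc₃ N hN hiter c₀ hinit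
end

section
/- Let n ≥ 2 be an integer, set ε = n/(n−1) and s₃ = 2n. Let p, c₁, s₂ be positive real numbers satisfying 2^{s₃} · c₁ · p^{−1} · ε^{2(n−1)} ≤ s₂². Then (2^{s₃} · c₁ · p) · (s₂ p)^{−s₃} ≤ (s₂ p ε)^{−s₃/ε}. -/
/-! Writing `t = s₃/ε = 2(n-1)`, the exponent splits as `s₃ = t + 2`. After factoring out
`(s₂ p)^(-t)` on both sides, the claim becomes `2^s₃ c₁ p ε^t ≤ (s₂ p)²`, which is the
hypothesis multiplied by `p²`. -/

open Real

theorem mul_rpow_neg_add_two_le_mul_rpow_neg_iff {K a ε t : ℝ} (ha : 0 < a) (hε : 0 < ε) :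
    K * a ^ (-(t + 2)) ≤ (a * ε) ^ (-t) ↔ K * ε ^ t ≤ a ^ 2 := by
  have hsplit : a ^ (-(t + 2)) = a ^ (-t) * (a ^ 2)⁻¹ := by
    rw [neg_add, rpow_add ha, rpow_neg ha.le 2, rpow_two]
  rw [hsplit, mul_rpow ha.le hε.le, rpow_neg hε.le, mul_left_comm,
    mul_le_mul_iff_right₀ (rpow_pos_of_pos ha _), ← div_eq_mul_inv, div_le_iff₀ (by positivity),
    ← div_eq_inv_mul, le_div_iff₀ (rpow_pos_of_pos hε _)]

theorem two_mul_div_div_sub_one {n : ℝ} (hn : 1 < n) : 2 * n / (n / (n - 1)) = 2 * (n - 1) := by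
  field_simp [(sub_pos.2 hn).ne', (zero_lt_one.trans hn).ne']

theorem induction_step_inequality_general
    (n : ℕ) (hn : 2 ≤ n)
    (ε : ℝ) (hε : ε = (n : ℝ) / ((n : ℝ) - 1))
    (s₃ : ℝ) (hs₃ : s₃ = 2 * n)
    (p c₁ s₂ : ℝ) (hp : 0 < p) (hs₂ : 0 < s₂)
    (h : (2 : ℝ) ^ s₃ * c₁ * p⁻¹ * ε ^ (2 * ((n : ℝ) - 1)) ≤ s₂ ^ 2) :
    (2 : ℝ) ^ s₃ * c₁ * p * (s₂ * p) ^ (-s₃) ≤ (s₂ * p * ε) ^ (-s₃ / ε) := by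
  have hn1 : (1 : ℝ) < n := by exact_mod_cast hn
  have hεpos : 0 < ε := hε ▸ div_pos (by linarith) (by linarith)
  have ht : s₃ / ε = 2 * ((n : ℝ) - 1) := by rw [hs₃, hε, two_mul_div_div_sub_one hn1]
  have hs₃' : s₃ = 2 * ((n : ℝ) - 1) + 2 := by rw [hs₃]; ring
  rw [neg_div, ht, hs₃', mul_rpow_neg_add_two_le_mul_rpow_neg_iff (mul_pos hs₂ hp) hεpos]
  calc (2 : ℝ) ^ (2 * ((n : ℝ) - 1) + 2) * c₁ * p * ε ^ (2 * ((n : ℝ) - 1))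
      = (2 : ℝ) ^ s₃ * c₁ * p⁻¹ * ε ^ (2 * ((n : ℝ) - 1)) * p ^ 2 := by
        rw [← hs₃']; field_simp
    _ ≤ s₂ ^ 2 * p ^ 2 := by gcongr
    _ = (s₂ * p) ^ 2 := by ring

/-- The key induction step in the Moser-iteration lemma. -/
theorem induction_step_inequality
    (n : ℕ) (hn : 2 ≤ n)
    (ε : ℝ) (hε : ε = (n : ℝ) / ((n : ℝ) - 1))
    (s₃ : ℝ) (hs₃ : s₃ = 2 * n)
    (p c₁ s₂ : ℝ) (hp : 0 < p) (hc₁ : 0 < c₁) (hs₂ : 0 < s₂)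
    (h : (2 : ℝ) ^ s₃ * c₁ * p⁻¹ * ε ^ (2 * ((n : ℝ) - 1)) ≤ s₂ ^ 2) :
    (2 : ℝ) ^ s₃ * c₁ * p * (s₂ * p) ^ (-s₃) ≤ (s₂ * p * ε) ^ (-s₃ / ε) :=
  induction_step_inequality_general n hn ε hε s₃ hs₃ p c₁ s₂ hp hs₂ h
end
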